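/- arXiv:math/0005295 — 3 statements merged into one kernel-verified Lean document; each statement's English description precedes it below -/
import Mathlib

section
/- For every natural number k ≥ 1 and every x ∈ (0,1), one has (1/k!) · |d/dx (x² (log x)^k)| ≤ 3. -/
open Real Set

lemma exp_neg_mul_pow_le (n : ℕ) (t : ℝ) (ht : 0 ≤ t) :
    Real.exp (-t) * t ^ n ≤ n.factorial := by
  have h1 : t ^ n / n.factorial ≤ Real.exp t := by
    calc t ^ n / (n.factorial : ℝ)
        ≤ ∑ i ∈ Finset.range (n + 1), t ^ i / (i.factorial : ℝ) :=
          Finset.single_le_sum (f := fun i => t ^ i / (i.factorial : ℝ))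
            (fun i _ => by positivity) (Finset.self_mem_range_succ n)
      _ ≤ Real.exp t := Real.sum_le_exp_of_nonneg ht _
  have h2 : t ^ n ≤ (n.factorial : ℝ) * Real.exp t := by
    rw [div_le_iff₀ (by positivity)] at h1; linarith [h1]
  calc Real.exp (-t) * t ^ n ≤ Real.exp (-t) * ((n.factorial : ℝ) * Real.exp t) :=
        mul_le_mul_of_nonneg_left h2 (Real.exp_pos _).le
    _ = n.factorial := by
        rw [← mul_assoc, mul_comm (Real.exp (-t)), mul_assoc, ← Real.exp_add,
          neg_add_cancel, Real.exp_zero, mul_one]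

lemma x_mul_abs_log_pow_le (n : ℕ) (x : ℝ) (hx0 : 0 < x) (hx1 : x < 1) :
    x * |Real.log x| ^ n ≤ n.factorial := by
  have hlog : Real.log x < 0 := Real.log_neg hx0 hx1
  calc x * |Real.log x| ^ n = Real.exp (-(-Real.log x)) * (-Real.log x) ^ n := by
        rw [abs_of_neg hlog, neg_neg, Real.exp_log hx0]
    _ ≤ n.factorial := exp_neg_mul_pow_le n (-Real.log x) (by linarith)

/-- For every `k ≥ 1` and `x ∈ (0,1)`, `(1/k!) |d/dx (x² (log x)^k)| ≤ 3`. -/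
theorem stmt1 (k : ℕ) (hk : 1 ≤ k) (x : ℝ) (hx : x ∈ Ioo (0 : ℝ) 1) :
    (1 / (Nat.factorial k : ℝ)) *
      |deriv (fun t : ℝ => t ^ 2 * (Real.log t) ^ k) x| ≤ 3 := by
  obtain ⟨hx0, hx1⟩ := hx
  have hd : HasDerivAt (fun t : ℝ => t ^ 2 * (Real.log t) ^ k)
      (2 * x ^ 1 * Real.log x ^ k + x ^ 2 * ((k : ℝ) * Real.log x ^ (k - 1) * x⁻¹)) x :=
    (hasDerivAt_pow 2 x).mul ((Real.hasDerivAt_log hx0.ne').pow k)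
  rw [hd.deriv]
  have hb1 : x * |Real.log x| ^ k ≤ k.factorial := x_mul_abs_log_pow_le k x hx0 hx1
  have hb2 : x * |Real.log x| ^ (k - 1) ≤ (k - 1).factorial :=
    x_mul_abs_log_pow_le (k - 1) x hx0 hx1
  have hfact : (k : ℝ) * ((k - 1).factorial : ℝ) = (k.factorial : ℝ) := by
    rw [← Nat.cast_mul, Nat.mul_factorial_pred (by omega)]
  have habs : |2 * x ^ 1 * Real.log x ^ k + x ^ 2 * ((k : ℝ) * Real.log x ^ (k - 1) * x⁻¹)|
      ≤ (3 : ℝ) * k.factorial := by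
    have heq : x ^ 2 * ((k : ℝ) * Real.log x ^ (k - 1) * x⁻¹)
        = (k : ℝ) * (x * Real.log x ^ (k - 1)) := by
      field_simp
    rw [heq]
    calc |2 * x ^ 1 * Real.log x ^ k + (k : ℝ) * (x * Real.log x ^ (k - 1))|
        ≤ |2 * x ^ 1 * Real.log x ^ k| + |(k : ℝ) * (x * Real.log x ^ (k - 1))| :=
          abs_add_le _ _
      _ = 2 * (x * |Real.log x| ^ k) + (k : ℝ) * (x * |Real.log x| ^ (k - 1)) := by
          simp only [abs_mul, abs_pow, abs_of_nonneg hx0.le,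
            abs_of_nonneg (by norm_num : (0:ℝ) ≤ 2), Nat.abs_cast]
          ring
      _ ≤ 2 * (k.factorial : ℝ) + (k : ℝ) * ((k - 1).factorial : ℝ) := by
          have := mul_le_mul_of_nonneg_left hb2 (by positivity : (0:ℝ) ≤ (k : ℝ))
          linarith
      _ = (3 : ℝ) * k.factorial := by rw [hfact]; ring
  have hkpos : (0 : ℝ) < k.factorial := by positivity
  rw [div_mul_eq_mul_div, one_mul, div_le_iff₀ hkpos]
  linarith [habs]
end

section
/- Let k ≥ 1 be an integer and λ > 0. For all a, b ∈ [0,∞), |a^k e^{-λa} - b^k e^{-λb}| / k! ≤ 3 (λ/2)^{-k} · |e^{-λa/2} - e^{-λb/2}|. -/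
open Real

lemma aux_pow_exp (m : ℕ) (u : ℝ) (hu : 0 ≤ u) :
    u ^ m * Real.exp (-u) ≤ (m.factorial : ℝ) := by
  have h1 : u ^ m / (m.factorial : ℝ) ≤ Real.exp u := by
    calc u ^ m / (m.factorial : ℝ)
        ≤ ∑ i ∈ Finset.range (m + 1), u ^ i / (i.factorial : ℝ) := by
          exact Finset.single_le_sum (f := fun i => u ^ i / (i.factorial : ℝ))
            (fun i _ => by positivity) (Finset.self_mem_range_succ m)
      _ ≤ Real.exp u := Real.sum_le_exp_of_nonneg hu _
  have hfac : (0:ℝ) < (m.factorial : ℝ) := by positivity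
  have := (div_le_iff₀ hfac).mp h1
  rw [Real.exp_neg]
  rw [mul_comm] at this
  calc u ^ m * (Real.exp u)⁻¹ ≤ ((m.factorial : ℝ) * Real.exp u) * (Real.exp u)⁻¹ := by
        apply mul_le_mul_of_nonneg_right this (by positivity)
    _ = (m.factorial : ℝ) := by
        rw [mul_assoc, mul_inv_cancel₀ (Real.exp_pos u).ne', mul_one]

/-- `t * |log t|^m ≤ m!` on `(0,1]`, stated with `-log t`. -/
lemma aux_t_log (m : ℕ) (t : ℝ) (ht : t ∈ Set.Ioc (0:ℝ) 1) :
    t * (-Real.log t) ^ m ≤ (m.factorial : ℝ) := by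
  have hu : 0 ≤ -Real.log t := by
    simpa using Real.log_nonpos ht.1.le ht.2
  have := aux_pow_exp m (-Real.log t) hu
  rwa [neg_neg, Real.exp_log ht.1, mul_comm] at this

lemma key_lip (k : ℕ) (hk : 1 ≤ k) {x y : ℝ}
    (hx : x ∈ Set.Ioc (0:ℝ) 1) (hy : y ∈ Set.Ioc (0:ℝ) 1) :
    |x ^ 2 * (-Real.log x) ^ k - y ^ 2 * (-Real.log y) ^ k|
      ≤ 3 * (k.factorial : ℝ) * |x - y| := by
  set g : ℝ → ℝ := fun t => t ^ 2 * (-Real.log t) ^ k with hg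
  set g' : ℝ → ℝ := fun t =>
    2 * t * (-Real.log t) ^ k + t ^ 2 * ((k : ℝ) * (-Real.log t) ^ (k - 1) * (-t⁻¹)) with hg'
  have hderiv : ∀ t ∈ Set.Ioc (0:ℝ) 1,
      HasDerivWithinAt g (g' t) (Set.Ioc (0:ℝ) 1) t := by
    intro t ht
    have h1 : HasDerivAt (fun t : ℝ => t ^ 2) (2 * t) t := by
      simpa using hasDerivAt_pow 2 t
    have h2 : HasDerivAt (fun t : ℝ => -Real.log t) (-t⁻¹) t :=
      (Real.hasDerivAt_log ht.1.ne').neg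
    have h3 : HasDerivAt (fun t : ℝ => (-Real.log t) ^ k)
        ((k : ℝ) * (-Real.log t) ^ (k - 1) * (-t⁻¹)) t := h2.pow k
    exact (h1.mul h3).hasDerivWithinAt
  have hbound : ∀ t ∈ Set.Ioc (0:ℝ) 1, ‖g' t‖ ≤ 3 * (k.factorial : ℝ) := by
    intro t ht
    have ht0 : 0 < t := ht.1
    have hlog : 0 ≤ -Real.log t := by simpa using Real.log_nonpos ht0.le ht.2
    have e1 : t * (-Real.log t) ^ k ≤ (k.factorial : ℝ) := aux_t_log k t ht
    have e2 : t * (-Real.log t) ^ (k - 1) ≤ ((k-1).factorial : ℝ) := aux_t_log (k-1) t ht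
    have hk1 : (k : ℝ) * ((k-1).factorial : ℝ) = (k.factorial : ℝ) := by
      rw [← Nat.cast_mul, Nat.mul_factorial_pred (by omega)]
    have habs : ‖g' t‖ ≤ 2 * (t * (-Real.log t) ^ k)
        + (k : ℝ) * (t * (-Real.log t) ^ (k - 1)) := by
      rw [Real.norm_eq_abs]
      have hrw : g' t = 2 * (t * (-Real.log t) ^ k)
          - (k : ℝ) * (t * (-Real.log t) ^ (k - 1)) := by
        simp only [hg']
        field_simp
        ring
      rw [hrw]
      have hA : 0 ≤ 2 * (t * (-Real.log t) ^ k) := by positivity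
      have hB : 0 ≤ (k : ℝ) * (t * (-Real.log t) ^ (k - 1)) := by positivity
      calc |2 * (t * (-Real.log t) ^ k) - (k : ℝ) * (t * (-Real.log t) ^ (k - 1))|
          ≤ max (2 * (t * (-Real.log t) ^ k)) ((k : ℝ) * (t * (-Real.log t) ^ (k - 1))) := by
            apply abs_sub_le_of_nonneg_of_le hA (le_max_left _ _) hB (le_max_right _ _)
        _ ≤ _ := max_le (le_add_of_nonneg_right hB) (le_add_of_nonneg_left hA)
    calc ‖g' t‖ ≤ 2 * (t * (-Real.log t) ^ k)
        + (k : ℝ) * (t * (-Real.log t) ^ (k - 1)) := habs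
      _ ≤ 2 * (k.factorial : ℝ) + (k : ℝ) * ((k-1).factorial : ℝ) := by
          gcongr
      _ = 3 * (k.factorial : ℝ) := by rw [hk1]; ring
  have := (convex_Ioc (0:ℝ) 1).norm_image_sub_le_of_norm_hasDerivWithin_le hderiv hbound hy hx
  simpa [Real.norm_eq_abs, hg] using this

/-- For integer `k ≥ 1`, `λ > 0` and `a, b ≥ 0`,
`|a^k e^{-λa} - b^k e^{-λb}| / k! ≤ 3 (λ/2)^{-k} |e^{-λa/2} - e^{-λb/2}|`. -/
theorem stmt2 (k : ℕ) (hk : 1 ≤ k) (lam : ℝ) (hlam : 0 < lam)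
    (a b : ℝ) (ha : 0 ≤ a) (hb : 0 ≤ b) :
    |a ^ k * Real.exp (-lam * a) - b ^ k * Real.exp (-lam * b)| / (Nat.factorial k : ℝ)
      ≤ 3 * ((lam / 2) ^ k)⁻¹ * |Real.exp (-lam * a / 2) - Real.exp (-lam * b / 2)| := by
  set x := Real.exp (-lam * a / 2) with hxdef
  set y := Real.exp (-lam * b / 2) with hydef
  have hx : x ∈ Set.Ioc (0:ℝ) 1 := ⟨Real.exp_pos _, Real.exp_le_one_iff.mpr (by nlinarith)⟩
  have hy : y ∈ Set.Ioc (0:ℝ) 1 := ⟨Real.exp_pos _, Real.exp_le_one_iff.mpr (by nlinarith)⟩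
  have hlogx : -Real.log x = lam * a / 2 := by rw [hxdef, Real.log_exp]; ring
  have hlogy : -Real.log y = lam * b / 2 := by rw [hydef, Real.log_exp]; ring
  have hx2 : x ^ 2 = Real.exp (-lam * a) := by
    rw [hxdef, ← Real.exp_nat_mul]; ring_nf
  have hy2 : y ^ 2 = Real.exp (-lam * b) := by
    rw [hydef, ← Real.exp_nat_mul]; ring_nf
  have hrw_a : a ^ k * Real.exp (-lam * a) = (2 / lam) ^ k * (x ^ 2 * (-Real.log x) ^ k) := by
    have h2 : (2 / lam) ^ k * (lam * a / 2) ^ k = a ^ k := by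
      rw [← mul_pow]; congr 1; field_simp
    rw [hlogx, hx2, ← h2]; ring
  have hrw_b : b ^ k * Real.exp (-lam * b) = (2 / lam) ^ k * (y ^ 2 * (-Real.log y) ^ k) := by
    have h2 : (2 / lam) ^ k * (lam * b / 2) ^ k = b ^ k := by
      rw [← mul_pow]; congr 1; field_simp
    rw [hlogy, hy2, ← h2]; ring
  have hkey := key_lip k hk hx hy
  have hc : (0:ℝ) < (2 / lam) ^ k := by positivity
  have hfac : (0:ℝ) < (k.factorial : ℝ) := by positivity
  have hinv : ((lam / 2) ^ k)⁻¹ = (2 / lam) ^ k := by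
    rw [← inv_pow]; congr 1; rw [inv_div]
  rw [hrw_a, hrw_b, ← mul_sub, abs_mul, abs_of_pos hc, hinv, div_le_iff₀ hfac]
  calc (2 / lam) ^ k * |x ^ 2 * (-Real.log x) ^ k - y ^ 2 * (-Real.log y) ^ k|
      ≤ (2 / lam) ^ k * (3 * (k.factorial : ℝ) * |x - y|) := by gcongr
    _ = 3 * (2 / lam) ^ k * |x - y| * (k.factorial : ℝ) := by ring
end

section
/- Let T be a bounded linear operator on a complex Banach space A, let h : A → ℂ be a nonzero bounded linear functional, let R ∈ A with h(R) ≠ 0 and T R = e^{-ξ} R for some real ξ, and suppose T maps ker(h) into itself and the operator norm of T^n restricted to ker(h) is at most c e^{-nξ} e^{-nu/6} for all n ≥ 1, with constants c, u > 0. Then e^{-ξ} is an eigenvalue of T, and the spectrum of T is contained in {e^{-ξ}} ∪ {z : |z| ≤ e^{-ξ} e^{-u/6}}; in particular e^{-ξ} is an isolated eigenvalue. -/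
open Real

set_option maxHeartbeats 1000000
set_option synthInstance.maxHeartbeats 400000

theorem aux_unit_stmt13 {B : Type*} [NormedRing B] [CompleteSpace B] (a : B) (N : ℕ)
    (hN : ‖a ^ N‖ < 1) : IsUnit (1 - a) := by
  have hu : IsUnit (1 - a ^ N) := (Units.oneSub _ hN).isUnit
  rw [← mul_neg_geom_sum a N] at hu
  have hcomm : Commute (1 - a) (∑ i ∈ Finset.range N, a ^ i) :=
    Commute.sum_right _ _ _ fun i _ =>
      ((Commute.one_left a).sub_left (Commute.refl a)).pow_right i
  exact (hcomm.isUnit_mul_iff.mp hu).1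

theorem aux_inj_stmt13 {V : Type*} [NormedAddCommGroup V] [Module ℂ V]
    (g : V →L[ℂ] V) (hg : IsUnit g) {x : V} (hx : g x = 0) : x = 0 := by
  obtain ⟨uu, huu⟩ := hg
  have h1 : ((↑uu⁻¹ : V →L[ℂ] V) * (↑uu : V →L[ℂ] V)) = 1 := uu.inv_mul
  have h2 : (↑uu⁻¹ : V →L[ℂ] V) ((↑uu : V →L[ℂ] V) x) = x := by
    rw [← ContinuousLinearMap.mul_apply, h1, ContinuousLinearMap.one_apply]
  rw [huu, hx, map_zero] at h2
  exact h2.symm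

theorem aux_spec_stmt13 {E : Type*} [NormedAddCommGroup E] [NormedSpace ℂ E] [CompleteSpace E]
    (S : E →L[ℂ] E) (c r : ℝ) (hc : 0 < c) (hr0 : 0 < r)
    (hSn : ∀ n : ℕ, 1 ≤ n → ‖S ^ n‖ ≤ c * r ^ n) (z : ℂ) (hz : r < ‖z‖) :
    IsUnit (algebraMap ℂ (E →L[ℂ] E) z - S) := by
  have hz0 : z ≠ 0 := by
    intro h0; rw [h0, norm_zero] at hz; linarith
  have hzpos : (0 : ℝ) < ‖z‖ := lt_trans hr0 hz
  set q : ℝ := r / ‖z‖ with hqdef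
  have hq0 : 0 ≤ q := div_nonneg hr0.le (norm_nonneg _)
  have hq1 : q < 1 := (div_lt_one hzpos).mpr hz
  obtain ⟨n, hn⟩ := exists_pow_lt_of_lt_one (show (0 : ℝ) < 1 / c by positivity) hq1
  set a : E →L[ℂ] E := z⁻¹ • S with hadef
  have hnormA : ‖a ^ (n + 1)‖ < 1 := by
    have h1 : ‖a ^ (n + 1)‖ = ‖z‖⁻¹ ^ (n + 1) * ‖S ^ (n + 1)‖ := by
      rw [hadef, smul_pow, norm_smul (z⁻¹ ^ (n + 1)) (S ^ (n + 1)), norm_pow, norm_inv]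
    have h2 : ‖z‖⁻¹ ^ (n + 1) * ‖S ^ (n + 1)‖ ≤ ‖z‖⁻¹ ^ (n + 1) * (c * r ^ (n + 1)) := by
      apply mul_le_mul_of_nonneg_left (hSn (n + 1) (Nat.le_add_left 1 n)) (by positivity)
    have h3 : ‖z‖⁻¹ ^ (n + 1) * (c * r ^ (n + 1)) = c * q ^ (n + 1) := by
      rw [hqdef, div_pow, div_eq_mul_inv, inv_pow]; ring
    have h4 : q ^ (n + 1) ≤ q ^ n := pow_le_pow_of_le_one hq0 hq1.le (Nat.le_succ n)
    have h5 : c * q ^ n < c * (1 / c) := mul_lt_mul_of_pos_left hn hc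
    have h6 : c * (1 / c) = 1 := by field_simp
    calc ‖a ^ (n + 1)‖ ≤ ‖z‖⁻¹ ^ (n + 1) * (c * r ^ (n + 1)) := le_trans h1.le h2
      _ = c * q ^ (n + 1) := h3
      _ ≤ c * q ^ n := mul_le_mul_of_nonneg_left h4 hc.le
      _ < 1 := by rw [← h6]; exact h5
  have h1a : IsUnit (1 - a) := aux_unit_stmt13 a (n + 1) hnormA
  have heq : algebraMap ℂ (E →L[ℂ] E) z - S = algebraMap ℂ (E →L[ℂ] E) z * (1 - a) := by
    rw [mul_sub, mul_one, ← Algebra.smul_def, hadef, smul_smul, mul_inv_cancel₀ hz0, one_smul]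
  rw [heq]
  exact ((isUnit_iff_ne_zero.mpr hz0).map (algebraMap ℂ (E →L[ℂ] E))).mul h1a

/-- Spectral gap from an invariant decomposition: if `T R = e^{-ξ} R` with `h R ≠ 0`,
`T` preserves `ker h`, and `‖T^n x‖ ≤ c e^{-nξ} e^{-nu/6} ‖x‖` for `x ∈ ker h`, then
`e^{-ξ}` is an eigenvalue of `T` and the rest of the spectrum lies in the disk of
radius `e^{-ξ} e^{-u/6}`; in particular `e^{-ξ}` is an isolated eigenvalue. -/
theorem stmt13 {A : Type*} [NormedAddCommGroup A] [NormedSpace ℂ A] [CompleteSpace A]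
    (T : A →L[ℂ] A) (h : A →L[ℂ] ℂ) (hh : h ≠ 0)
    (R : A) (hR : h R ≠ 0) (ξ : ℝ)
    (heig : T R = (Real.exp (-ξ) : ℂ) • R)
    (hker : ∀ x : A, h x = 0 → h (T x) = 0)
    (c u : ℝ) (hc : 0 < c) (hu : 0 < u)
    (hbound : ∀ n : ℕ, 1 ≤ n → ∀ x : A, h x = 0 →
      ‖(T ^ n) x‖ ≤ c * Real.exp (-(n : ℝ) * ξ) * Real.exp (-(n : ℝ) * u / 6) * ‖x‖) :
    ((Real.exp (-ξ) : ℂ) ∈ spectrum ℂ T ∧ ∃ x : A, x ≠ 0 ∧ T x = (Real.exp (-ξ) : ℂ) • x) ∧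
    spectrum ℂ T ⊆ {(Real.exp (-ξ) : ℂ)} ∪
      {z : ℂ | ‖z‖ ≤ Real.exp (-ξ) * Real.exp (-u / 6)} := by
  set μ : ℂ := (Real.exp (-ξ) : ℂ) with hμdef
  have hR0 : R ≠ 0 := fun hr => hR (by simp [hr])
  set r : ℝ := Real.exp (-ξ) * Real.exp (-u / 6) with hrdef
  have hr0 : 0 < r := mul_pos (Real.exp_pos _) (Real.exp_pos _)
  -- invariant subspace
  set K : Submodule ℂ A := LinearMap.ker (h : A →ₗ[ℂ] ℂ) with hKdef
  haveI : CompleteSpace K := (ContinuousLinearMap.isClosed_ker h).completeSpace_coe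
  have hmem : ∀ x : K, (T ∘L K.subtypeL) x ∈ K := fun x => by
    simpa [hKdef, LinearMap.mem_ker] using hker x.1 (LinearMap.mem_ker.mp x.2)
  set S : K →L[ℂ] K := (T ∘L K.subtypeL).codRestrict K hmem with hSdef
  have hScoe : ∀ x : K, ((S x : A)) = T (x : A) := fun x => rfl
  have hSpow : ∀ (n : ℕ) (x : K), (((S ^ n) x : A)) = (T ^ n) (x : A) := by
    intro n
    induction n with
    | zero => intro x; simp
    | succ n ih =>
      intro x
      rw [pow_succ, pow_succ, ContinuousLinearMap.mul_apply, ContinuousLinearMap.mul_apply,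
        ih (S x), hScoe x]
  -- norm bound on powers of S
  have hSn : ∀ n : ℕ, 1 ≤ n → ‖S ^ n‖ ≤ c * r ^ n := by
    intro n hn
    refine ContinuousLinearMap.opNorm_le_bound _ (by positivity) fun x => ?_
    have hx : h (x : A) = 0 := LinearMap.mem_ker.mp x.2
    have hb := hbound n hn (x : A) hx
    have hnorm1 : ‖(S ^ n) x‖ = ‖((S ^ n) x : A)‖ := rfl
    have hnorm2 : ‖x‖ = ‖(x : A)‖ := rfl
    rw [hnorm1, hSpow n x, hnorm2]
    calc ‖(T ^ n) (x : A)‖ ≤ c * Real.exp (-(n : ℝ) * ξ) * Real.exp (-(n : ℝ) * u / 6) * ‖(x : A)‖ := hb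
      _ = c * r ^ n * ‖(x : A)‖ := by
          rw [hrdef, mul_pow, show -(n : ℝ) * ξ = (n : ℝ) * (-ξ) by ring,
            show -(n : ℝ) * u / 6 = (n : ℝ) * (-u / 6) by ring,
            Real.exp_nat_mul, Real.exp_nat_mul]
          ring
  -- invertibility of z - S for ‖z‖ > r
  have hunit : ∀ z : ℂ, r < ‖z‖ → IsUnit (algebraMap ℂ (K →L[ℂ] K) z - S) := fun z hz =>
    aux_spec_stmt13 S c r hc hr0 hSn z hz
  -- eigenvalue part
  have hμspec : μ ∈ spectrum ℂ T := by
    rw [spectrum.mem_iff]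
    intro hU
    have hzero : (algebraMap ℂ (A →L[ℂ] A) μ - T) R = 0 := by
      rw [ContinuousLinearMap.sub_apply, Algebra.algebraMap_eq_smul_one,
        ContinuousLinearMap.smul_apply, ContinuousLinearMap.one_apply, heig, sub_self]
    exact hR0 (aux_inj_stmt13 _ hU hzero)
  refine ⟨⟨hμspec, R, hR0, heig⟩, ?_⟩
  -- spectrum inclusion
  intro z hzspec
  by_contra hcon
  simp only [Set.mem_union, Set.mem_singleton_iff, Set.mem_setOf_eq, not_or, not_le] at hcon
  obtain ⟨hzμ, hzr⟩ := hcon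
  have hzμ' : z - μ ≠ 0 := sub_ne_zero.mpr hzμ
  set f : A →L[ℂ] A := algebraMap ℂ (A →L[ℂ] A) z - T with hfdef
  have hfapp : ∀ x : A, f x = z • x - T x := by
    intro x
    rw [hfdef, ContinuousLinearMap.sub_apply, Algebra.algebraMap_eq_smul_one,
      ContinuousLinearMap.smul_apply, ContinuousLinearMap.one_apply]
  have hSU : IsUnit (algebraMap ℂ (K →L[ℂ] K) z - S) := hunit z hzr
  set gK : K →L[ℂ] K := algebraMap ℂ (K →L[ℂ] K) z - S with hgKdef
  have hgKapp : ∀ x : K, ((gK x : A)) = z • (x : A) - T (x : A) := by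
    intro x
    rw [hgKdef, ContinuousLinearMap.sub_apply, Algebra.algebraMap_eq_smul_one,
      ContinuousLinearMap.smul_apply, ContinuousLinearMap.one_apply]
    push_cast [Submodule.coe_sub, Submodule.coe_smul]
    rw [hScoe]
  -- injectivity
  have hinj : LinearMap.ker (f : A →ₗ[ℂ] A) = ⊥ := by
    rw [LinearMap.ker_eq_bot']
    intro x hx
    have hzx : z • x = T x := by
      have := hfapp x
      rw [show f x = 0 from hx] at this
      exact (sub_eq_zero.mp this.symm)
    set aa : ℂ := h x / h R with haadef
    have hxa : h x = aa * h R := by rw [haadef, div_mul_cancel₀ _ hR]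
    have hx0 : h (x - aa • R) = 0 := by
      rw [map_sub, map_smul, smul_eq_mul, hxa, sub_self]
    have hTx : h (T x) = aa * μ * h R := by
      have hdecomp : T x = T (x - aa • R) + aa • T R := by
        rw [← map_smul, ← map_add]; congr 1; abel
      rw [hdecomp, map_add, hker _ hx0, zero_add, heig, map_smul, map_smul,
        smul_eq_mul, smul_eq_mul]
      ring
    have hTx' : h (T x) = z * (aa * h R) := by
      rw [← hzx, map_smul, smul_eq_mul, hxa]
    have haa0 : aa = 0 := by
      have : aa * (z - μ) * h R = 0 := by
        have hcomb : z * (aa * h R) = aa * μ * h R := by rw [← hTx', hTx]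
        linear_combination hcomb
      rcases mul_eq_zero.mp this with h1 | h1
      · rcases mul_eq_zero.mp h1 with h2 | h2
        · exact h2
        · exact absurd h2 hzμ'
      · exact absurd h1 hR
    have hxK : h x = 0 := by rw [hxa, haa0, zero_mul]
    set xK : K := ⟨x, LinearMap.mem_ker.mpr hxK⟩ with hxKdef
    have hgzero : gK xK = 0 := by
      apply Subtype.ext
      rw [hgKapp xK]
      show z • x - T x = (0 : A)
      rw [hzx, sub_self]
    have := aux_inj_stmt13 gK hSU hgzero
    exact congrArg Subtype.val this
  -- surjectivity
  have hsurj : LinearMap.range (f : A →ₗ[ℂ] A) = ⊤ := by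
    rw [LinearMap.range_eq_top]
    intro y
    set aa : ℂ := h y / h R with haadef
    have hy0 : h (y - aa • R) = 0 := by
      rw [map_sub, map_smul, smul_eq_mul, haadef, div_mul_cancel₀ _ hR, sub_self]
    set yK : K := ⟨y - aa • R, LinearMap.mem_ker.mpr hy0⟩ with hyKdef
    obtain ⟨uu, huu⟩ := hSU
    set xK : K := (↑uu⁻¹ : K →L[ℂ] K) yK with hxKdef
    have hx1 : gK xK = yK := by
      rw [← huu, hxKdef, ← ContinuousLinearMap.mul_apply, uu.mul_inv,
        ContinuousLinearMap.one_apply]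
    set b : ℂ := aa / (z - μ) with hbdef
    have hb : b * (z - μ) = aa := by rw [hbdef, div_mul_cancel₀ _ hzμ']
    refine ⟨b • R + (xK : A), ?_⟩
    have hcoe : z • (xK : A) - T (xK : A) = y - aa • R := by
      have := congrArg Subtype.val hx1
      rw [hgKapp xK] at this
      exact this
    rw [ContinuousLinearMap.coe_coe, hfapp]
    rw [smul_add, map_add, map_smul, heig, smul_smul, smul_smul]
    calc (z • b) • R + z • (xK : A) - ((b * μ) • R + T (xK : A))
        = (b * (z - μ)) • R + (z • (xK : A) - T (xK : A)) := by
          rw [smul_eq_mul]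
          module
      _ = aa • R + (y - aa • R) := by rw [hb, hcoe]
      _ = y := by abel
  -- conclude z is not in the spectrum
  have hUf : IsUnit f := by
    set e := ContinuousLinearEquiv.ofBijective f hinj hsurj with hedef
    have hecoe : ∀ w : A, e w = f w := fun w => by
      rw [hedef, ContinuousLinearEquiv.coeFn_ofBijective]
    refine ⟨⟨f, (e.symm : A →L[ℂ] A), ?_, ?_⟩, rfl⟩
    · ext x
      simp only [ContinuousLinearMap.mul_apply, ContinuousLinearMap.one_apply,
        ContinuousLinearMap.coe_coe, ContinuousLinearEquiv.coe_coe]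
      rw [← hecoe, e.apply_symm_apply]
    · ext x
      simp only [ContinuousLinearMap.mul_apply, ContinuousLinearMap.one_apply,
        ContinuousLinearMap.coe_coe, ContinuousLinearEquiv.coe_coe]
      rw [← hecoe, e.symm_apply_apply]
  exact (spectrum.notMem_iff.mpr hUf) hzspec
end
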